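/- Cone property of the penalized estimator (deterministic core): let ℒ be a convex differentiable function on ℝ^{m₁×m₂}, λ > 2‖∇ℒ(X̃)‖_op, and suppose ℒ(X) + λ‖X‖₁ ≤ ℒ(X̃) + λ‖X̃‖₁. Then ‖P_{X̃}^⊥(X - X̃)‖₁ ≤ 3‖P_{X̃}(X - X̃)‖₁, and consequently ‖X - X̃‖₁ ≤ 4√(2·rank X̃)·‖X - X̃‖_F. -/

import Mathlib

/-!
Write `Δ = X - X̃`. Convexity of `ℒ` along the segment from `X̃` to `X` gives
`ℒ X ≥ ℒ X̃ + ⟨G, Δ⟩`, and the duality `⟨G, Δ⟩ ≥ -‖G‖_op ‖Δ‖₁` turns the optimality of `X` into the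
basic inequality `λ (‖X‖₁ - ‖X̃‖₁) ≤ ‖G‖_op ‖Δ‖₁`. The component `B = P_{X̃}^⊥(Δ)` has column and
row spaces orthogonal to those of `X̃`, hence `‖X̃ + B‖₁ = ‖X̃‖₁ + ‖B‖₁`: the polar factors of `X̃`
and of `B` add up to a partial isometry `W`, and `⟨W, X̃ + B⟩ = ‖X̃‖₁ + ‖B‖₁` with `‖W‖_op ≤ 1`.
Two triangle inequalities and `λ > 2‖G‖_op` then give the cone condition. Finally
`A = P_{X̃}(Δ) = P₁Δ + (1 - P₁)ΔP₂` has rank at most `2 rank X̃` and is Frobenius-orthogonal to `B`,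
so Cauchy–Schwarz over its nonzero singular values gives `‖A‖₁ ≤ √(2 rank X̃) ‖Δ‖_F`, while
`‖Δ‖₁ ≤ ‖A‖₁ + ‖B‖₁ ≤ 4‖A‖₁`.
-/

open Matrix

noncomputable def singularValues {m n : ℕ} (A : Matrix (Fin m) (Fin n) ℝ) : Fin n → ℝ :=
  fun i => Real.sqrt ((Matrix.isHermitian_conjTranspose_mul_self A).eigenvalues i)

noncomputable def nuclearNorm {m n : ℕ} (A : Matrix (Fin m) (Fin n) ℝ) : ℝ :=
  ∑ i, singularValues A i

noncomputable def opNorm {m n : ℕ} (A : Matrix (Fin m) (Fin n) ℝ) : ℝ :=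
  ⨆ i, singularValues A i

noncomputable def frobNorm {m n : ℕ} (A : Matrix (Fin m) (Fin n) ℝ) : ℝ :=
  Real.sqrt (∑ i, ∑ j, (A i j) ^ 2)

structure IsOrthProjOnto {k : ℕ} (P : Matrix (Fin k) (Fin k) ℝ) (V : Submodule ℝ (Fin k → ℝ)) : Prop where
  symm : Pᵀ = P
  idem : P * P = P
  range : LinearMap.range P.mulVecLin = V

theorem ConvexOn.add_le_of_hasDerivAt_line {E : Type*} [AddCommGroup E] [Module ℝ E]
    {f : E → ℝ} (hf : ConvexOn ℝ Set.univ f) {x y : E} {d : ℝ}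
    (hd : HasDerivAt (fun t : ℝ => f (x + t • y)) d 0) : f x + d ≤ f (x + y) := by
  have hline : ConvexOn ℝ Set.univ (fun t : ℝ => f (x + t • y)) := by
    simpa [Function.comp_def, AffineMap.lineMap_apply_module', add_comm]
      using hf.comp_affineMap (AffineMap.lineMap x (x + y))
  have := hline.le_slope_of_hasDerivAt (Set.mem_univ 0) (Set.mem_univ 1) zero_lt_one hd
  simp only [slope_def_field, one_smul, zero_smul, add_zero, sub_zero, div_one] at this
  linarith

section DotProduct

variable {k l : Type*} [Fintype k] [Fintype l]

lemma dotProduct_mulVec_self_eq (A : Matrix k l ℝ) (v : l → ℝ) :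
    (A *ᵥ v) ⬝ᵥ (A *ᵥ v) = v ⬝ᵥ (Aᵀ * A) *ᵥ v := by
  rw [← mulVec_mulVec, dotProduct_mulVec v, ← mulVec_transpose, transpose_transpose]

lemma dotProduct_le_mul_of_dotProduct_self_le {u w : k → ℝ} {a b : ℝ}
    (ha : 0 ≤ a) (hb : 0 ≤ b) (hu : u ⬝ᵥ u ≤ a ^ 2) (hw : w ⬝ᵥ w ≤ b ^ 2) : u ⬝ᵥ w ≤ a * b := by
  have hcs : (u ⬝ᵥ w) ^ 2 ≤ (u ⬝ᵥ u) * (w ⬝ᵥ w) := by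
    simpa only [dotProduct, sq] using Finset.sum_mul_sq_le_sq_mul_sq Finset.univ u w
  have : (u ⬝ᵥ w) ^ 2 ≤ (a * b) ^ 2 := by
    rw [mul_pow]
    exact hcs.trans (mul_le_mul hu hw (by simpa using dotProduct_self_star_nonneg w) (sq_nonneg a))
  exact le_of_abs_le (abs_le_of_sq_le_sq this (mul_nonneg ha hb))

lemma dotProduct_mulVec_le_of_isIdempotentElem [DecidableEq k] {Q : Matrix k k ℝ} (hs : Qᵀ = Q)
    (hi : IsIdempotentElem Q) (v : k → ℝ) : v ⬝ᵥ Q *ᵥ v ≤ v ⬝ᵥ v := by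
  have hcompl : (1 - Q)ᵀ * (1 - Q) = 1 - Q := by
    rw [transpose_sub, transpose_one, hs]; exact hi.one_sub.eq
  have h : 0 ≤ v ⬝ᵥ (1 - Q) *ᵥ v := by
    rw [← hcompl, ← dotProduct_mulVec_self_eq]
    simpa using dotProduct_self_star_nonneg ((1 - Q) *ᵥ v)
  rw [sub_mulVec, one_mulVec, dotProduct_sub] at h
  linarith

lemma isIdempotentElem_transpose_mul_self {W : Matrix l k ℝ}
    (h : W * Wᵀ * W = W) : IsIdempotentElem (Wᵀ * W) := by
  rw [IsIdempotentElem, ← Matrix.mul_assoc, Matrix.mul_assoc Wᵀ W Wᵀ, Matrix.mul_assoc Wᵀ, h]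

end DotProduct

section OrthogonalConj

variable {n : Type*} [Fintype n] [DecidableEq n]

lemma conj_diagonal_mul_conj_diagonal {V : Matrix n n ℝ} (hV : Vᵀ * V = 1) (x y : n → ℝ) :
    V * diagonal x * Vᵀ * (V * diagonal y * Vᵀ) = V * diagonal (x * y) * Vᵀ := by
  calc V * diagonal x * Vᵀ * (V * diagonal y * Vᵀ)
        = V * diagonal x * (Vᵀ * V) * diagonal y * Vᵀ := by simp only [Matrix.mul_assoc]
    _ = V * diagonal (x * y) * Vᵀ := by
        rw [hV, Matrix.mul_one, Matrix.mul_assoc V, diagonal_mul_diagonal]; rfl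

lemma transpose_conj_diagonal (V : Matrix n n ℝ) (x : n → ℝ) :
    (V * diagonal x * Vᵀ)ᵀ = V * diagonal x * Vᵀ := by
  simp [Matrix.transpose_mul, Matrix.mul_assoc]

lemma trace_conj_diagonal {V : Matrix n n ℝ} (hV : Vᵀ * V = 1) (x : n → ℝ) :
    trace (V * diagonal x * Vᵀ) = ∑ i, x i := by
  rw [trace_mul_comm, ← Matrix.mul_assoc, hV, Matrix.one_mul, trace_diagonal]

lemma dotProduct_conj_diagonal_mulVec_le {V : Matrix n n ℝ} (hV : V * Vᵀ = 1) {x : n → ℝ}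
    {c : ℝ} (hx : ∀ i, x i ≤ c) (v : n → ℝ) :
    v ⬝ᵥ (V * diagonal x * Vᵀ) *ᵥ v ≤ c * (v ⬝ᵥ v) := by
  set w := Vᵀ *ᵥ v
  have hquad : v ⬝ᵥ (V * diagonal x * Vᵀ) *ᵥ v = ∑ i, x i * w i ^ 2 := by
    rw [← mulVec_mulVec, ← mulVec_mulVec, dotProduct_mulVec, ← mulVec_transpose]
    simp only [dotProduct, mulVec_diagonal, w]
    exact Finset.sum_congr rfl fun i _ => by ring
  have hnorm : v ⬝ᵥ v = ∑ i, w i ^ 2 := by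
    rw [show v ⬝ᵥ v = w ⬝ᵥ w by
      rw [dotProduct_mulVec, vecMul_transpose, mulVec_mulVec, hV, one_mulVec]]
    simp [dotProduct, sq]
  rw [hquad, hnorm, Finset.mul_sum]
  exact Finset.sum_le_sum fun i _ => mul_le_mul_of_nonneg_right (hx i) (sq_nonneg _)

lemma trace_transpose_mul_eq_sum {m : Type*} [Fintype m] {V : Matrix n n ℝ} (hV : V * Vᵀ = 1)
    (G M : Matrix m n ℝ) :
    trace (Gᵀ * M) = ∑ i, (G *ᵥ (V *ᵥ Pi.single i 1)) ⬝ᵥ (M *ᵥ (V *ᵥ Pi.single i 1)) := by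
  calc trace (Gᵀ * M) = trace (Gᵀ * M * V * Vᵀ) := by rw [Matrix.mul_assoc _ V, hV, Matrix.mul_one]
    _ = trace ((G * V)ᵀ * (M * V)) := by
        rw [trace_mul_comm, transpose_mul]; simp only [Matrix.mul_assoc]
    _ = _ := by
        simp only [mulVec_single_one]
        simp only [trace, diag_apply, mul_apply, transpose_apply, dotProduct, mulVec, col_apply]

end OrthogonalConj

section Spectral

variable {m n : ℕ}

noncomputable def rightSingularVectors (A : Matrix (Fin m) (Fin n) ℝ) : Matrix (Fin n) (Fin n) ℝ :=
  ((isHermitian_conjTranspose_mul_self A).eigenvectorUnitary : Matrix (Fin n) (Fin n) ℝ)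

variable (A : Matrix (Fin m) (Fin n) ℝ)

lemma rightSingularVectors_transpose_mul :
    (rightSingularVectors A)ᵀ * rightSingularVectors A = 1 := by
  simpa [rightSingularVectors, star_eq_conjTranspose] using
    (mem_unitaryGroup_iff').mp (isHermitian_conjTranspose_mul_self A).eigenvectorUnitary.2

lemma rightSingularVectors_mul_transpose : rightSingularVectors A * (rightSingularVectors A)ᵀ = 1 :=
  mul_eq_one_comm.mp (rightSingularVectors_transpose_mul A)

lemma singularValues_nonneg (i : Fin n) : 0 ≤ singularValues A i := Real.sqrt_nonneg _

lemma transpose_mul_self_eq_conj_diagonal :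
    Aᵀ * A =
      rightSingularVectors A * diagonal (singularValues A ^ 2) * (rightSingularVectors A)ᵀ := by
  have hsq : singularValues A ^ 2 = (isHermitian_conjTranspose_mul_self A).eigenvalues := by
    funext i
    exact Real.sq_sqrt (eigenvalues_conjTranspose_mul_self_nonneg A i)
  rw [hsq]
  simpa [rightSingularVectors, star_eq_conjTranspose, Unitary.conjStarAlgAut_apply,
    Function.comp_def] using
    (isHermitian_conjTranspose_mul_self A).spectral_theorem

lemma dotProduct_self_rightSingularVector (i : Fin n) :
    (rightSingularVectors A *ᵥ Pi.single i 1) ⬝ᵥ (rightSingularVectors A *ᵥ Pi.single i 1) = 1 := by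
  rw [dotProduct_mulVec, ← mulVec_transpose, mulVec_mulVec, rightSingularVectors_transpose_mul,
    one_mulVec]
  simp

lemma gram_mul_rightSingularVectors :
    (A * rightSingularVectors A)ᵀ * (A * rightSingularVectors A) =
      diagonal (singularValues A ^ 2) := by
  rw [transpose_mul, Matrix.mul_assoc, ← Matrix.mul_assoc Aᵀ, transpose_mul_self_eq_conj_diagonal]
  simp only [← Matrix.mul_assoc, rightSingularVectors_transpose_mul, Matrix.one_mul]
  rw [Matrix.mul_assoc, rightSingularVectors_transpose_mul, Matrix.mul_one]

lemma mulVec_rightSingularVector_dotProduct_self (i : Fin n) :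
    (A *ᵥ (rightSingularVectors A *ᵥ Pi.single i 1)) ⬝ᵥ
        (A *ᵥ (rightSingularVectors A *ᵥ Pi.single i 1))
      = singularValues A i ^ 2 := by
  rw [mulVec_mulVec, dotProduct_mulVec_self_eq, gram_mul_rightSingularVectors]
  simp

end Spectral

section OperatorNorm

variable {m n : ℕ} (A : Matrix (Fin m) (Fin n) ℝ)

lemma opNorm_nonneg : 0 ≤ opNorm A := Real.iSup_nonneg (singularValues_nonneg A)

lemma singularValues_le_opNorm (i : Fin n) : singularValues A i ≤ opNorm A :=
  le_ciSup (Set.finite_range _).bddAbove i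

lemma mulVec_dotProduct_self_le_opNorm_sq (v : Fin n → ℝ) :
    (A *ᵥ v) ⬝ᵥ (A *ᵥ v) ≤ opNorm A ^ 2 * (v ⬝ᵥ v) := by
  rw [dotProduct_mulVec_self_eq, transpose_mul_self_eq_conj_diagonal]
  refine dotProduct_conj_diagonal_mulVec_le (rightSingularVectors_mul_transpose A) (fun i => ?_) v
  exact pow_le_pow_left₀ (singularValues_nonneg A i) (singularValues_le_opNorm A i) 2

lemma opNorm_le_of_mulVec_dotProduct_self_le {c : ℝ} (hc : 0 ≤ c)
    (h : ∀ v, (A *ᵥ v) ⬝ᵥ (A *ᵥ v) ≤ c ^ 2 * (v ⬝ᵥ v)) : opNorm A ≤ c := by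
  refine Real.iSup_le (fun i => ?_) hc
  have := h (rightSingularVectors A *ᵥ Pi.single i 1)
  rw [mulVec_rightSingularVector_dotProduct_self, dotProduct_self_rightSingularVector,
    mul_one] at this
  exact (pow_le_pow_iff_left₀ (singularValues_nonneg A i) hc two_ne_zero).mp this

theorem trace_transpose_mul_le_opNorm_mul_nuclearNorm (G M : Matrix (Fin m) (Fin n) ℝ) :
    trace (Gᵀ * M) ≤ opNorm G * nuclearNorm M := by
  rw [trace_transpose_mul_eq_sum (rightSingularVectors_mul_transpose M), nuclearNorm,
    Finset.mul_sum]
  refine Finset.sum_le_sum fun i _ => dotProduct_le_mul_of_dotProduct_self_le (opNorm_nonneg G)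
    (singularValues_nonneg M i) ?_ (mulVec_rightSingularVector_dotProduct_self M i).le
  simpa only [dotProduct_self_rightSingularVector, mul_one] using
    mulVec_dotProduct_self_le_opNorm_sq G (rightSingularVectors M *ᵥ Pi.single i 1)

lemma opNorm_le_one_of_isIdempotentElem (W : Matrix (Fin m) (Fin n) ℝ)
    (h : IsIdempotentElem (Wᵀ * W)) : opNorm W ≤ 1 :=
  opNorm_le_of_mulVec_dotProduct_self_le W zero_le_one fun v => by
    rw [dotProduct_mulVec_self_eq, one_pow, one_mul]
    exact dotProduct_mulVec_le_of_isIdempotentElem (by simp [transpose_mul]) h v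

end OperatorNorm

section PolarFactor

variable {m n : ℕ} (M : Matrix (Fin m) (Fin n) ℝ)

/-- With `0⁻¹ = 0` this is the pseudo-inverse of `(MᵀM)^(1/2)`, so that `M * pinvSqrtGram M` is
the partial isometry `U Vᵀ` of a singular value decomposition `M = U Σ Vᵀ`. -/
noncomputable def pinvSqrtGram : Matrix (Fin n) (Fin n) ℝ :=
  rightSingularVectors M * diagonal (singularValues M)⁻¹ * (rightSingularVectors M)ᵀ

noncomputable def polarFactor : Matrix (Fin m) (Fin n) ℝ := M * pinvSqrtGram M

lemma transpose_polarFactor_mul {l : Type*} [Fintype l] (C : Matrix (Fin m) l ℝ) :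
    (polarFactor M)ᵀ * C = pinvSqrtGram M * (Mᵀ * C) := by
  rw [polarFactor, transpose_mul, pinvSqrtGram, transpose_conj_diagonal, Matrix.mul_assoc]

lemma trace_transpose_polarFactor_mul_self : trace ((polarFactor M)ᵀ * M) = nuclearNorm M := by
  rw [transpose_polarFactor_mul, transpose_mul_self_eq_conj_diagonal, pinvSqrtGram,
    conj_diagonal_mul_conj_diagonal (rightSingularVectors_transpose_mul M),
    trace_conj_diagonal (rightSingularVectors_transpose_mul M), nuclearNorm]
  simp only [Pi.mul_apply, Pi.inv_apply, sq, ← mul_assoc, inv_mul_mul_self]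

lemma polarFactor_mul_transpose_mul_self :
    polarFactor M * (polarFactor M)ᵀ * polarFactor M = polarFactor M := by
  have hV := rightSingularVectors_transpose_mul M
  rw [Matrix.mul_assoc, transpose_polarFactor_mul, polarFactor, Matrix.mul_assoc M,
    ← Matrix.mul_assoc Mᵀ, transpose_mul_self_eq_conj_diagonal, pinvSqrtGram,
    conj_diagonal_mul_conj_diagonal hV, conj_diagonal_mul_conj_diagonal hV,
    conj_diagonal_mul_conj_diagonal hV]
  congr 4
  funext i
  simp only [Pi.mul_apply, Pi.inv_apply, Pi.pow_apply]
  rcases eq_or_ne (singularValues M i) 0 with h | h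
  · simp [h]
  · field_simp

lemma exists_polarFactor_eq_mul : ∃ Z : Matrix (Fin m) (Fin m) ℝ, polarFactor M = Z * M := by
  have hV := rightSingularVectors_transpose_mul M
  refine ⟨M * (pinvSqrtGram M * pinvSqrtGram M * pinvSqrtGram M) * Mᵀ, ?_⟩
  rw [Matrix.mul_assoc, Matrix.mul_assoc, transpose_mul_self_eq_conj_diagonal,
    polarFactor, pinvSqrtGram, conj_diagonal_mul_conj_diagonal hV,
    conj_diagonal_mul_conj_diagonal hV, conj_diagonal_mul_conj_diagonal hV]
  congr 4
  funext i
  simp only [Pi.mul_apply, Pi.inv_apply, Pi.pow_apply]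
  rcases eq_or_ne (singularValues M i) 0 with h | h
  · simp [h]
  · field_simp

lemma opNorm_polarFactor_le_one : opNorm (polarFactor M) ≤ 1 :=
  opNorm_le_one_of_isIdempotentElem _
    (isIdempotentElem_transpose_mul_self (polarFactor_mul_transpose_mul_self M))

end PolarFactor

section NuclearNorm

variable {m n : ℕ}

lemma nuclearNorm_nonneg (A : Matrix (Fin m) (Fin n) ℝ) : 0 ≤ nuclearNorm A :=
  Finset.sum_nonneg fun i _ => singularValues_nonneg A i

lemma singularValues_eq_of_gram_eq {A B : Matrix (Fin m) (Fin n) ℝ} (h : Aᵀ * A = Bᵀ * B) :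
    singularValues A = singularValues B := by
  have heig := ((isHermitian_conjTranspose_mul_self A).eigenvalues_eq_eigenvalues_iff
    (isHermitian_conjTranspose_mul_self B)).mpr
      (by simp only [conjTranspose_eq_transpose_of_trivial, h])
  funext i
  simp only [singularValues, heig]

lemma nuclearNorm_neg (A : Matrix (Fin m) (Fin n) ℝ) : nuclearNorm (-A) = nuclearNorm A := by
  simp only [nuclearNorm, singularValues_eq_of_gram_eq (A := -A) (B := A) (by simp)]

lemma trace_transpose_mul_le_nuclearNorm {W : Matrix (Fin m) (Fin n) ℝ} (hW : opNorm W ≤ 1)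
    (M : Matrix (Fin m) (Fin n) ℝ) : trace (Wᵀ * M) ≤ nuclearNorm M :=
  (trace_transpose_mul_le_opNorm_mul_nuclearNorm W M).trans
    (mul_le_of_le_one_left (nuclearNorm_nonneg M) hW)

theorem nuclearNorm_add_le (A B : Matrix (Fin m) (Fin n) ℝ) :
    nuclearNorm (A + B) ≤ nuclearNorm A + nuclearNorm B := by
  rw [← trace_transpose_polarFactor_mul_self, Matrix.mul_add, trace_add]
  exact add_le_add (trace_transpose_mul_le_nuclearNorm (opNorm_polarFactor_le_one _) A)
    (trace_transpose_mul_le_nuclearNorm (opNorm_polarFactor_le_one _) B)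

lemma nuclearNorm_sub_le (A B : Matrix (Fin m) (Fin n) ℝ) :
    nuclearNorm (A - B) ≤ nuclearNorm A + nuclearNorm B := by
  simpa only [sub_eq_add_neg, nuclearNorm_neg] using nuclearNorm_add_le A (-B)

theorem nuclearNorm_add_of_orthogonal {Y B : Matrix (Fin m) (Fin n) ℝ} (hcol : Yᵀ * B = 0)
    (hrow : Y * Bᵀ = 0) : nuclearNorm (Y + B) = nuclearNorm Y + nuclearNorm B := by
  obtain ⟨ZY, hZY⟩ := exists_polarFactor_eq_mul Y
  obtain ⟨ZB, hZB⟩ := exists_polarFactor_eq_mul B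
  have hcol' : Bᵀ * Y = 0 := by rw [← transpose_transpose Y, ← transpose_mul, hcol, transpose_zero]
  have hWcol : (polarFactor Y)ᵀ * polarFactor B = 0 := by
    rw [transpose_polarFactor_mul, polarFactor, ← Matrix.mul_assoc Yᵀ, hcol, Matrix.zero_mul,
      Matrix.mul_zero]
  have hWcol' : (polarFactor B)ᵀ * polarFactor Y = 0 := by
    rw [transpose_polarFactor_mul, polarFactor, ← Matrix.mul_assoc Bᵀ, hcol', Matrix.zero_mul,
      Matrix.mul_zero]
  have hWrow : polarFactor Y * (polarFactor B)ᵀ = 0 := by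
    rw [hZY, hZB, transpose_mul, Matrix.mul_assoc, ← Matrix.mul_assoc Y, hrow, Matrix.zero_mul,
      Matrix.mul_zero]
  have hWrow' : polarFactor B * (polarFactor Y)ᵀ = 0 := by
    rw [← transpose_transpose (polarFactor B), ← transpose_mul, hWrow, transpose_zero]
  have hidem :
      IsIdempotentElem ((polarFactor Y + polarFactor B)ᵀ * (polarFactor Y + polarFactor B)) := by
    rw [transpose_add, Matrix.add_mul, Matrix.mul_add, Matrix.mul_add, hWcol, hWcol', add_zero,
      zero_add]
    refine (isIdempotentElem_transpose_mul_self (polarFactor_mul_transpose_mul_self Y)).add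
      (isIdempotentElem_transpose_mul_self (polarFactor_mul_transpose_mul_self B)) ?_
    simp only [Matrix.mul_assoc, ← Matrix.mul_assoc (polarFactor Y) (polarFactor B)ᵀ,
      ← Matrix.mul_assoc (polarFactor B) (polarFactor Y)ᵀ, hWrow, hWrow', Matrix.zero_mul,
      Matrix.mul_zero, add_zero]
  have htrace : trace ((polarFactor Y + polarFactor B)ᵀ * (Y + B)) =
      nuclearNorm Y + nuclearNorm B := by
    rw [transpose_add, Matrix.add_mul, Matrix.mul_add, Matrix.mul_add, trace_add, trace_add,
      trace_add, trace_transpose_polarFactor_mul_self, trace_transpose_polarFactor_mul_self,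
      transpose_polarFactor_mul Y B, transpose_polarFactor_mul B Y, hcol, hcol']
    simp
  refine le_antisymm (nuclearNorm_add_le Y B) ?_
  rw [← htrace]
  exact trace_transpose_mul_le_nuclearNorm (opNorm_le_one_of_isIdempotentElem _ hidem) _

end NuclearNorm

section RankAndFrobenius

variable {m n : ℕ}

lemma trace_transpose_mul_self_eq_sum_sq (A : Matrix (Fin m) (Fin n) ℝ) :
    trace (Aᵀ * A) = ∑ i, ∑ j, A i j ^ 2 := by
  rw [trace, Finset.sum_comm]
  simp [mul_apply, sq]

lemma frobNorm_eq_sqrt_trace (A : Matrix (Fin m) (Fin n) ℝ) :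
    frobNorm A = Real.sqrt (trace (Aᵀ * A)) := by
  rw [frobNorm, trace_transpose_mul_self_eq_sum_sq]

lemma frobNorm_eq_sqrt_sum_sq_singularValues (A : Matrix (Fin m) (Fin n) ℝ) :
    frobNorm A = Real.sqrt (∑ i, singularValues A i ^ 2) := by
  rw [frobNorm_eq_sqrt_trace, transpose_mul_self_eq_conj_diagonal,
    trace_conj_diagonal (rightSingularVectors_transpose_mul A)]
  rfl

lemma frobNorm_le_of_trace_transpose_mul_eq_zero {A B : Matrix (Fin m) (Fin n) ℝ}
    (h : trace (Aᵀ * B) = 0) : frobNorm A ≤ frobNorm (A + B) := by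
  have h' : trace (Bᵀ * A) = 0 := by rw [← trace_transpose, transpose_mul, transpose_transpose, h]
  rw [frobNorm_eq_sqrt_trace, frobNorm_eq_sqrt_trace]
  refine Real.sqrt_le_sqrt ?_
  rw [transpose_add, Matrix.add_mul, Matrix.mul_add, Matrix.mul_add, trace_add, trace_add,
    trace_add, h, h', trace_transpose_mul_self_eq_sum_sq B]
  linarith [show 0 ≤ ∑ i, ∑ j, B i j ^ 2 by positivity]

lemma rank_eq_card_singularValues_ne_zero (A : Matrix (Fin m) (Fin n) ℝ) :
    A.rank = (Finset.univ.filter fun i => singularValues A i ≠ 0).card := by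
  rw [← rank_conjTranspose_mul_self,
    (isHermitian_conjTranspose_mul_self A).rank_eq_card_non_zero_eigs, Fintype.card_subtype]
  simp only [singularValues, ne_eq,
    Real.sqrt_eq_zero (eigenvalues_conjTranspose_mul_self_nonneg A _)]

theorem nuclearNorm_le_sqrt_rank_mul_frobNorm (A : Matrix (Fin m) (Fin n) ℝ) :
    nuclearNorm A ≤ Real.sqrt A.rank * frobNorm A := by
  classical
  set s := Finset.univ.filter fun i => singularValues A i ≠ 0
  have hsupp : nuclearNorm A = ∑ i ∈ s, singularValues A i :=
    (Finset.sum_filter_ne_zero _).symm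
  have hsq : ∑ i ∈ s, singularValues A i ^ 2 ≤ ∑ i, singularValues A i ^ 2 :=
    Finset.sum_le_sum_of_subset_of_nonneg (Finset.subset_univ s) fun i _ _ => sq_nonneg _
  rw [frobNorm_eq_sqrt_sum_sq_singularValues, ← Real.sqrt_mul (Nat.cast_nonneg _),
    Real.le_sqrt (nuclearNorm_nonneg A) (by positivity), rank_eq_card_singularValues_ne_zero, hsupp]
  exact (sq_sum_le_card_mul_sum_sq).trans (mul_le_mul_of_nonneg_left hsq (Nat.cast_nonneg _))

theorem Matrix.rank_add_le {K : Type*} [Field K] {k l : Type*} [Fintype k] [Fintype l]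
    (A B : Matrix k l K) : (A + B).rank ≤ A.rank + B.rank := by
  have hle : LinearMap.range (A + B).mulVecLin ≤
      LinearMap.range A.mulVecLin ⊔ LinearMap.range B.mulVecLin := by
    rintro x ⟨v, rfl⟩
    rw [mulVecLin_add]
    exact Submodule.add_mem_sup ⟨v, rfl⟩ ⟨v, rfl⟩
  exact (Submodule.finrank_mono hle).trans (Submodule.finrank_add_le_finrank_add_finrank _ _)

end RankAndFrobenius

namespace IsOrthProjOnto

variable {k l : ℕ} {P : Matrix (Fin k) (Fin k) ℝ} {C : Matrix (Fin k) (Fin l) ℝ}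

lemma mul_eq (h : IsOrthProjOnto P (LinearMap.range C.mulVecLin)) : P * C = C := by
  refine ext_iff_mulVec.mpr fun v => ?_
  obtain ⟨u, hu⟩ : C *ᵥ v ∈ LinearMap.range P.mulVecLin := h.range ▸ ⟨v, rfl⟩
  rw [← mulVec_mulVec, ← hu, mulVecLin_apply, mulVec_mulVec, h.idem]

lemma one_sub_mul_eq_zero (h : IsOrthProjOnto P (LinearMap.range C.mulVecLin)) :
    (1 - P) * C = 0 := by
  rw [Matrix.sub_mul, Matrix.one_mul, h.mul_eq, sub_self]

lemma transpose_mul_one_sub_eq_zero (h : IsOrthProjOnto P (LinearMap.range C.mulVecLin)) :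
    Cᵀ * (1 - P) = 0 := by
  rw [← h.symm, ← transpose_one, ← transpose_sub, ← transpose_mul, h.one_sub_mul_eq_zero,
    transpose_zero]

lemma rank_eq (h : IsOrthProjOnto P (LinearMap.range C.mulVecLin)) : P.rank = C.rank := by
  rw [Matrix.rank, h.range, Matrix.rank]

end IsOrthProjOnto

section ComplementaryProjections

variable {m₁ m₂ : ℕ} (P₁ : Matrix (Fin m₁) (Fin m₁) ℝ) (P₂ : Matrix (Fin m₂) (Fin m₂) ℝ)
  (Δ : Matrix (Fin m₁) (Fin m₂) ℝ)

lemma rank_sub_compl_mul_compl_le : (Δ - (1 - P₁) * Δ * (1 - P₂)).rank ≤ P₁.rank + P₂.rank := by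
  rw [show Δ - (1 - P₁) * Δ * (1 - P₂) = P₁ * Δ + (1 - P₁) * Δ * P₂ by
    simp only [Matrix.sub_mul, Matrix.mul_sub, Matrix.one_mul, Matrix.mul_one]; abel]
  exact (Matrix.rank_add_le _ _).trans (add_le_add (rank_mul_le_left _ _) (rank_mul_le_right _ _))

variable {P₁ P₂}

lemma frobNorm_sub_compl_mul_compl_le (hP₁ : P₁ᵀ = P₁) (hP₁' : P₁ * P₁ = P₁) (hP₂ : P₂ᵀ = P₂)
    (hP₂' : P₂ * P₂ = P₂) : frobNorm (Δ - (1 - P₁) * Δ * (1 - P₂)) ≤ frobNorm Δ := by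
  have hP₁c : P₁ * (1 - P₁) = 0 := by rw [Matrix.mul_sub, Matrix.mul_one, hP₁', sub_self]
  have hP₂c : (1 - P₂) * P₂ = 0 := by rw [Matrix.sub_mul, Matrix.one_mul, hP₂', sub_self]
  have horth : trace ((Δ - (1 - P₁) * Δ * (1 - P₂))ᵀ * ((1 - P₁) * Δ * (1 - P₂))) = 0 := by
    have hsplit : (Δ - (1 - P₁) * Δ * (1 - P₂))ᵀ * ((1 - P₁) * Δ * (1 - P₂)) =
        Δᵀ * (P₁ * (1 - P₁)) * Δ * (1 - P₂) +
          P₂ * (Δᵀ * (1 - P₁) * (1 - P₁) * Δ * (1 - P₂)) := by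
      simp only [transpose_sub, transpose_mul, hP₁, hP₂, Matrix.sub_mul, Matrix.mul_sub,
        Matrix.one_mul, Matrix.mul_one, Matrix.mul_assoc]
      abel
    rw [hsplit, hP₁c, trace_add, trace_mul_comm P₂, Matrix.mul_assoc _ (1 - P₂), hP₂c]
    simp
  simpa using frobNorm_le_of_trace_transpose_mul_eq_zero horth

lemma nuclearNorm_add_compl_mul_compl {Y : Matrix (Fin m₁) (Fin m₂) ℝ} (hP₁ : P₁ᵀ = P₁)
    (hP₂ : P₂ᵀ = P₂) (hY₁ : (1 - P₁) * Y = 0) (hY₂ : Y * (1 - P₂) = 0) :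
    nuclearNorm (Y + (1 - P₁) * Δ * (1 - P₂)) =
      nuclearNorm Y + nuclearNorm ((1 - P₁) * Δ * (1 - P₂)) := by
  refine nuclearNorm_add_of_orthogonal ?_ ?_
  · rw [← Matrix.mul_assoc, ← Matrix.mul_assoc, ← hP₁, ← transpose_one, ← transpose_sub,
      ← transpose_mul, hY₁]
    simp
  · rw [transpose_mul, transpose_mul, transpose_sub, transpose_one, hP₂, ← Matrix.mul_assoc,
      ← Matrix.mul_assoc, hY₂]
    simp

end ComplementaryProjections

lemma nuclearNorm_le_three_mul_of_basic_inequality {m n : ℕ}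
    {X Xt B : Matrix (Fin m) (Fin n) ℝ} {lam g : ℝ} (hg : 0 ≤ g) (hlam : 2 * g < lam)
    (hbasic : lam * (nuclearNorm X - nuclearNorm Xt) ≤ g * nuclearNorm (X - Xt))
    (hdecomp : nuclearNorm (Xt + B) = nuclearNorm Xt + nuclearNorm B) :
    nuclearNorm B ≤ 3 * nuclearNorm (X - Xt - B) := by
  have hX : nuclearNorm (Xt + B) ≤ nuclearNorm X + nuclearNorm (X - Xt - B) := by
    simpa only [sub_sub_cancel_left, sub_neg_eq_add, sub_sub, sub_sub_cancel] using
      nuclearNorm_sub_le X (X - Xt - B)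
  have hΔ : nuclearNorm (X - Xt) ≤ nuclearNorm (X - Xt - B) + nuclearNorm B := by
    simpa using nuclearNorm_add_le (X - Xt - B) B
  nlinarith [nuclearNorm_nonneg (X - Xt - B)]

theorem cone_property_penalized {m₁ m₂ : ℕ} (L : Matrix (Fin m₁) (Fin m₂) ℝ → ℝ)
    (hconv : ConvexOn ℝ Set.univ L)
    (X Xt G : Matrix (Fin m₁) (Fin m₂) ℝ)
    (hgrad : ∀ Y : Matrix (Fin m₁) (Fin m₂) ℝ,
      HasDerivAt (fun t : ℝ => L (Xt + t • Y)) (Matrix.trace (Gᵀ * Y)) 0)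
    (lam : ℝ) (hlam : lam > 2 * opNorm G)
    (hobj : L X + lam * nuclearNorm X ≤ L Xt + lam * nuclearNorm Xt)
    (P₁ : Matrix (Fin m₁) (Fin m₁) ℝ) (P₂ : Matrix (Fin m₂) (Fin m₂) ℝ)
    (hP₁ : IsOrthProjOnto P₁ (LinearMap.range Xt.mulVecLin))
    (hP₂ : IsOrthProjOnto P₂ (LinearMap.range Xtᵀ.mulVecLin)) :
    nuclearNorm ((1 - P₁) * (X - Xt) * (1 - P₂)) ≤
        3 * nuclearNorm ((X - Xt) - (1 - P₁) * (X - Xt) * (1 - P₂)) ∧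
      nuclearNorm (X - Xt) ≤ 4 * Real.sqrt (2 * Xt.rank) * frobNorm (X - Xt) := by
  set Δ := X - Xt
  set B := (1 - P₁) * Δ * (1 - P₂)
  have hbasic : lam * (nuclearNorm X - nuclearNorm Xt) ≤ opNorm G * nuclearNorm Δ := by
    have htangent := hconv.add_le_of_hasDerivAt_line (hgrad Δ)
    have hdual := trace_transpose_mul_le_opNorm_mul_nuclearNorm G (-Δ)
    rw [add_sub_cancel] at htangent
    rw [Matrix.mul_neg, trace_neg, nuclearNorm_neg] at hdual
    linarith
  have hdecomp : nuclearNorm (Xt + B) = nuclearNorm Xt + nuclearNorm B :=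
    nuclearNorm_add_compl_mul_compl Δ hP₁.symm hP₂.symm hP₁.one_sub_mul_eq_zero
      (by simpa using hP₂.transpose_mul_one_sub_eq_zero)
  have hcone := nuclearNorm_le_three_mul_of_basic_inequality (opNorm_nonneg G) hlam hbasic hdecomp
  refine ⟨hcone, ?_⟩
  have hrank : ((Δ - B).rank : ℝ) ≤ 2 * Xt.rank := by
    have := rank_sub_compl_mul_compl_le P₁ P₂ Δ
    rw [hP₁.rank_eq, hP₂.rank_eq, rank_transpose] at this
    exact_mod_cast this.trans_eq (two_mul _).symm
  have hfrob := frobNorm_sub_compl_mul_compl_le Δ hP₁.symm hP₁.idem hP₂.symm hP₂.idem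
  calc nuclearNorm Δ ≤ nuclearNorm (Δ - B) + nuclearNorm B := by
        simpa using nuclearNorm_add_le (Δ - B) B
    _ ≤ 4 * (Real.sqrt (Δ - B).rank * frobNorm (Δ - B)) := by
        linarith [nuclearNorm_le_sqrt_rank_mul_frobNorm (Δ - B)]
    _ ≤ 4 * (Real.sqrt (2 * Xt.rank) * frobNorm Δ) := by
        gcongr
        exact Real.sqrt_nonneg _
    _ = 4 * Real.sqrt (2 * Xt.rank) * frobNorm Δ := by ring
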